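/- Let q = (q_1, …, q_n) be a normalized central configuration of n bodies in the plane with positive masses m_1, …, m_n, and let M = Σ_i m_i. Then: (i) if n ≥ 2, max_i |q_i| ≤ M^{1/3} (n − 1); and (ii) if n ≥ 4, max_i |q_i| ≤ M^{1/3} (2^{1/3} + 2^{−2/3}) (n − 2)^{2/3}. -/

import Mathlib

/-!
Project the configuration on the unit vector `u` pointing towards `q i`, so that
`‖q i‖ = ⟪q i, u⟫`. The equations give `∑ m j • q j = 0`, and for every set `S` of bodies,
`∑ j ∈ S, m j • q j` is the total attraction between `S` and its complement. Cutting the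
projected values at two consecutive ones `a < b`, with `S` the bodies projected to `≥ b`, each
term of that attraction is at most `m j * m l / (b - a) ^ 2`, which yields `(b - a) ^ 3 ≤ M` and
`(b - a) ^ 2 * b ≤ M`. Some projection is `≤ 0` and there are at most `n` distinct values, so
summing gaps gives `‖q i‖ ≤ (n - 1) M^{1/3}`; and since every gap ending above
`y = (M (n - 2)² / 4)^{1/3}` is at most `z = 2 y / (n - 2)`, also
`‖q i‖ ≤ max (y + (n - 2) z) ((n - 1) z) = 3 y` when `n ≥ 4`.
-/

open Finset

abbrev E2 : Type := EuclideanSpace ℝ (Fin 2)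

/-- The equations for a normalized central configuration:
`q_i = Σ_{j≠i} (m_j / |q_i − q_j|³)(q_i − q_j)` for every `i`. -/
def CCeqs {ι : Type} [Fintype ι] [DecidableEq ι] (m : ι → ℝ) (q : ι → E2) : Prop :=
  ∀ i, q i = ∑ j ∈ Finset.univ.filter (· ≠ i), (m j / ‖q i - q j‖ ^ 3) • (q i - q j)

open RealInnerProductSpace

namespace Finset

variable {α : Type*} [LinearOrder α]

def Consecutive (s : Finset α) (a b : α) : Prop :=
  a ∈ s ∧ b ∈ s ∧ a < b ∧ ∀ c ∈ s, c ≤ a ∨ b ≤ c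

theorem forall_le_of_consecutive (F : ℕ → α) (s : Finset α) (h₁ : ∃ x ∈ s, x ≤ F 1)
    (hstep : ∀ a b k, s.Consecutive a b → 0 < k → a ≤ F k → b ≤ F (k + 1)) :
    ∀ x ∈ s, x ≤ F #s := by
  classical
  induction s using Finset.induction_on_max with
  | empty => simp
  | insert c t hlt ih =>
    have hct : c ∉ t := fun h => lt_irrefl c (hlt c h)
    rw [card_insert_of_notMem hct]
    rcases t.eq_empty_or_nonempty with rfl | ht
    · obtain ⟨x, hx, hx₁⟩ := h₁
      simp only [mem_insert, notMem_empty, or_false] at hx ⊢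
      subst hx
      simpa using hx₁
    have ht₁ : ∃ x ∈ t, x ≤ F 1 := by
      obtain ⟨x, hx, hx₁⟩ := h₁
      rcases mem_insert.1 hx with rfl | hx
      · exact ⟨t.min' ht, min'_mem t ht, (hlt _ (min'_mem t ht)).le.trans hx₁⟩
      · exact ⟨x, hx, hx₁⟩
    have hsub : ∀ a b, t.Consecutive a b → (insert c t).Consecutive a b := by
      rintro a b ⟨ha, hb, hab, hcut⟩
      refine ⟨mem_insert_of_mem ha, mem_insert_of_mem hb, hab, fun d hd => ?_⟩
      rcases mem_insert.1 hd with rfl | hd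
      · exact Or.inr (hlt b hb).le
      · exact hcut d hd
    have htop : (insert c t).Consecutive (t.max' ht) c :=
      ⟨mem_insert_of_mem (max'_mem t ht), mem_insert_self c t, hlt _ (max'_mem t ht),
        fun d hd => (mem_insert.1 hd).elim (fun h => Or.inr h.ge)
          (fun hd => Or.inl (le_max' t d hd))⟩
    have hc : c ≤ F (#t + 1) := hstep _ _ _ htop (card_pos.2 ht)
      (ih ht₁ (fun a b k hab => hstep a b k (hsub a b hab)) _ (max'_mem t ht))
    intro x hx
    rcases mem_insert.1 hx with rfl | hx
    · exact hc
    · exact (hlt x hx).le.trans hc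

theorem sum_sum_eq_zero_of_antisymm {ι M : Type*} [AddCommGroup M] [IsAddTorsionFree M]
    {F : ι → ι → M} (hF : ∀ j l, F l j = -F j l) (S : Finset ι) :
    ∑ j ∈ S, ∑ l ∈ S, F j l = 0 := by
  have h : ∑ j ∈ S, ∑ l ∈ S, F j l = -∑ j ∈ S, ∑ l ∈ S, F j l := by
    conv_lhs => rw [sum_comm]
    rw [← sum_neg_distrib]
    exact sum_congr rfl fun l _ => by rw [← sum_neg_distrib]; exact sum_congr rfl fun j _ => hF l j
  exact self_eq_neg.mp h

end Finset

theorem le_rpow_one_div_three_of_pow_le {x M : ℝ} (hx : 0 ≤ x) (h : x ^ 3 ≤ M) :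
    x ≤ M ^ ((1 : ℝ) / 3) := by
  rw [one_div, Real.le_rpow_inv_iff_of_pos hx ((pow_nonneg hx 3).trans h) (by norm_num)]
  exact_mod_cast h

theorem rpow_one_div_three_pow_three {x : ℝ} (hx : 0 ≤ x) : (x ^ ((1 : ℝ) / 3)) ^ 3 = x := by
  rw [← Real.rpow_natCast, ← Real.rpow_mul hx]
  norm_num

theorem le_of_consecutive_pow_three_le {V : Finset ℝ} {M : ℝ} {n : ℕ} (hM : 0 ≤ M)
    (hV : #V ≤ n) (h₀ : ∃ x ∈ V, x ≤ 0)
    (hgap : ∀ a b, V.Consecutive a b → (b - a) ^ 3 ≤ M) :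
    ∀ x ∈ V, x ≤ M ^ ((1 : ℝ) / 3) * (n - 1) := by
  have hc : 0 ≤ M ^ ((1 : ℝ) / 3) := Real.rpow_nonneg hM _
  intro x hx
  calc x ≤ M ^ ((1 : ℝ) / 3) * (#V - 1) := by
        refine V.forall_le_of_consecutive (fun k => M ^ ((1 : ℝ) / 3) * (k - 1)) ?_ ?_ x hx
        · simpa using h₀
        · intro a b k hab _ ha
          have hgap' := le_rpow_one_div_three_of_pow_le (sub_pos.2 hab.2.2.1).le (hgap a b hab)
          push_cast
          linarith
    _ ≤ M ^ ((1 : ℝ) / 3) * (n - 1) := by gcongr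

theorem le_of_consecutive_sq_mul_le {V : Finset ℝ} {M : ℝ} {n : ℕ} (hM : 0 < M) (hn : 4 ≤ n)
    (hV : #V ≤ n) (h₀ : ∃ x ∈ V, x ≤ 0)
    (hgap : ∀ a b, V.Consecutive a b → (b - a) ^ 2 * b ≤ M) :
    ∀ x ∈ V, x ≤ 3 * (M * (n - 2) ^ 2 / 4) ^ ((1 : ℝ) / 3) := by
  have hn' : (2 : ℝ) ≤ n - 2 := by
    have : (4 : ℝ) ≤ n := by exact_mod_cast hn
    linarith
  have hy3 := rpow_one_div_three_pow_three (x := M * (n - 2) ^ 2 / 4) (by positivity)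
  set y := (M * (n - 2) ^ 2 / 4) ^ ((1 : ℝ) / 3)
  have hy : 0 < y := by positivity
  set z := 2 * y / (n - 2)
  have hz : 0 < z := by positivity
  have hnz : (n - 2) * z = 2 * y := by simp only [z]; field_simp
  have hzy : z ^ 2 * y = M := by
    calc z ^ 2 * y = 4 * y ^ 3 / (n - 2) ^ 2 := by simp only [z]; field_simp; ring
      _ = M := by rw [hy3]; field_simp
  intro x hx
  -- `y + (k - 2) * z` if two of the `k` smallest values lie below `y`, `(k - 1) * z` if only the
  -- smallest one (which is `≤ 0`) does
  calc x ≤ max (y + (#V - 2) * z) ((#V - 1) * z) := by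
        refine V.forall_le_of_consecutive (fun k => max (y + (k - 2) * z) ((k - 1) * z)) ?_ ?_ x hx
        · obtain ⟨x, hx, hx0⟩ := h₀
          exact ⟨x, hx, le_max_of_le_right (by simpa using hx0)⟩
        · intro a b k hab hk ha
          push_cast
          rcases lt_or_ge b y with hby | hyb
          · have : (1 : ℝ) ≤ k := by exact_mod_cast hk
            exact le_max_of_le_left (by nlinarith)
          have hd : b - a ≤ z := by
            refine (pow_le_pow_iff_left₀ (sub_pos.2 hab.2.2.1).le hz.le two_ne_zero).1 ?_
            refine le_of_mul_le_mul_right ?_ hy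
            calc (b - a) ^ 2 * y ≤ (b - a) ^ 2 * b := by gcongr
              _ ≤ z ^ 2 * y := hzy ▸ hgap a b hab
          rcases le_max_iff.1 ha with ha | ha
          · exact le_max_of_le_left (by linarith)
          · exact le_max_of_le_right (by linarith)
    _ ≤ max (y + (n - 2) * z) ((n - 1) * z) := by
        have : (#V : ℝ) ≤ n := by exact_mod_cast hV
        gcongr
    _ ≤ 3 * y := by
        have hzy' : z ≤ y := by
          rw [div_le_iff₀ (by linarith)]
          nlinarith
        refine max_le ?_ ?_ <;> nlinarith

theorem inner_div_norm_pow_three_le {F : Type*} [NormedAddCommGroup F] [InnerProductSpace ℝ F]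
    {u v : F} {G : ℝ} (hu : ‖u‖ = 1) (hG : 0 < G) (hv : G ≤ ⟪v, u⟫) :
    ⟪v, u⟫ / ‖v‖ ^ 3 ≤ 1 / G ^ 2 := by
  have ht : 0 < ⟪v, u⟫ := hG.trans_le hv
  have hnorm : ⟪v, u⟫ ≤ ‖v‖ := by simpa [hu] using real_inner_le_norm v u
  calc ⟪v, u⟫ / ‖v‖ ^ 3 ≤ ⟪v, u⟫ / ⟪v, u⟫ ^ 3 := by gcongr
    _ = 1 / ⟪v, u⟫ ^ 2 := by field_simp
    _ ≤ 1 / G ^ 2 := by gcongr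

theorem exists_norm_eq_one_inner_eq_norm {F : Type*} [NormedAddCommGroup F]
    [InnerProductSpace ℝ F] [Nontrivial F] (x : F) : ∃ u : F, ‖u‖ = 1 ∧ ⟪x, u⟫ = ‖x‖ := by
  rcases eq_or_ne x 0 with rfl | hx
  · obtain ⟨u, hu⟩ := exists_norm_eq F zero_le_one
    exact ⟨u, hu, by simp⟩
  · refine ⟨‖x‖⁻¹ • x, by simp [norm_smul, hx], ?_⟩
    rw [real_inner_smul_right, real_inner_self_eq_norm_sq]
    field_simp

theorem gap_bounds_of_moment_bounds {A B P a b : ℝ} (hA : 0 < A) (hB : 0 < B) (hab : a < b)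
    (hb : A * b ≤ P) (ha : -(B * a) ≤ P) (hP : P ≤ A * B / (b - a) ^ 2) :
    (b - a) ^ 3 ≤ A + B ∧ (b - a) ^ 2 * b ≤ B := by
  have hG : 0 < b - a := sub_pos.2 hab
  constructor
  · have h : A * B * (b - a) ≤ (A + B) * (A * B / (b - a) ^ 2) := by nlinarith
    rw [mul_div_assoc', le_div_iff₀ (by positivity)] at h
    nlinarith [mul_pos hA hB]
  · rw [← le_div_iff₀' (by positivity)]
    exact le_of_mul_le_mul_left (by rw [mul_div_assoc']; linarith) hA

namespace CCeqs

variable {ι : Type} [Fintype ι] [DecidableEq ι] {m : ι → ℝ} {q : ι → E2}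

theorem smul_eq_sum (hcc : CCeqs m q) (j : ι) :
    m j • q j = ∑ l, (m j * m l / ‖q j - q l‖ ^ 3) • (q j - q l) := by
  have h := congrArg (m j • ·) (hcc j)
  simp only [smul_sum, smul_smul, filter_ne'] at h
  rw [h, sum_erase _ (by simp)]
  simp only [mul_div_assoc]

theorem sum_smul_eq_sum_compl (hcc : CCeqs m q) (S : Finset ι) :
    ∑ j ∈ S, m j • q j =
      ∑ j ∈ S, ∑ l ∈ Sᶜ, (m j * m l / ‖q j - q l‖ ^ 3) • (q j - q l) := by
  have hanti : ∀ j l, (m l * m j / ‖q l - q j‖ ^ 3) • (q l - q j) =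
      -((m j * m l / ‖q j - q l‖ ^ 3) • (q j - q l)) := by
    intro j l
    rw [norm_sub_rev, mul_comm (m l), ← smul_neg, neg_sub]
  have : IsAddTorsionFree E2 := .of_module_rat E2
  simp only [smul_eq_sum hcc, ← sum_add_sum_compl S, sum_add_distrib,
    sum_sum_eq_zero_of_antisymm hanti, zero_add]

theorem sum_smul_eq_zero (hcc : CCeqs m q) : ∑ j, m j • q j = 0 := by
  simpa using sum_smul_eq_sum_compl hcc univ

theorem sum_mul_inner_eq_zero (hcc : CCeqs m q) (u : E2) : ∑ j, m j * ⟪q j, u⟫ = 0 := by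
  simpa [sum_inner, real_inner_smul_left] using congrArg (⟪·, u⟫) hcc.sum_smul_eq_zero

theorem gap_bounds (hcc : CCeqs m q) (hm : ∀ i, 0 < m i) {u : E2} (hu : ‖u‖ = 1) {a b : ℝ}
    (hab : (univ.image fun j => ⟪q j, u⟫).Consecutive a b) :
    (b - a) ^ 3 ≤ ∑ j, m j ∧ (b - a) ^ 2 * b ≤ ∑ j, m j := by
  obtain ⟨ha, hb, hlt, hcut⟩ := hab
  set S := univ.filter fun j => b ≤ ⟪q j, u⟫
  have hS : ∀ j ∈ S, b ≤ ⟪q j, u⟫ := fun j hj => (mem_filter.1 hj).2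
  have hSc : ∀ j ∈ Sᶜ, ⟪q j, u⟫ ≤ a := fun j hj =>
    (hcut _ (mem_image_of_mem _ (mem_univ j))).resolve_right fun h => mem_compl.1 hj (by simpa [S])
  have hA : 0 < ∑ j ∈ S, m j := by
    obtain ⟨j, -, hj⟩ := mem_image.1 hb
    exact sum_pos (fun j _ => hm j) ⟨j, by simp [S, hj]⟩
  have hB : 0 < ∑ j ∈ Sᶜ, m j := by
    obtain ⟨j, -, hj⟩ := mem_image.1 ha
    exact sum_pos (fun j _ => hm j) ⟨j, by simp [S, hj, hlt]⟩
  have hmoment := congrArg (⟪·, u⟫) (hcc.sum_smul_eq_sum_compl S)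
  simp only [sum_inner, real_inner_smul_left] at hmoment
  have hup : ∑ j ∈ S, m j * ⟪q j, u⟫ ≤ (∑ j ∈ S, m j) * (∑ j ∈ Sᶜ, m j) / (b - a) ^ 2 := by
    calc ∑ j ∈ S, m j * ⟪q j, u⟫ = _ := hmoment
      _ ≤ ∑ j ∈ S, ∑ l ∈ Sᶜ, m j * m l * (1 / (b - a) ^ 2) := by
        refine sum_le_sum fun j hj => sum_le_sum fun l hl => ?_
        rw [div_mul_eq_mul_div, mul_div_assoc]
        refine mul_le_mul_of_nonneg_left (inner_div_norm_pow_three_le hu (sub_pos.2 hlt) ?_)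
          (mul_pos (hm j) (hm l)).le
        linarith [inner_sub_left (𝕜 := ℝ) (q j) (q l) u, hS j hj, hSc l hl]
      _ = _ := by simp only [← sum_mul, ← mul_sum]; ring
  have hlowS : (∑ j ∈ S, m j) * b ≤ ∑ j ∈ S, m j * ⟪q j, u⟫ := by
    rw [sum_mul]
    exact sum_le_sum fun j hj => mul_le_mul_of_nonneg_left (hS j hj) (hm j).le
  have hlowSc : ∑ j ∈ Sᶜ, m j * ⟪q j, u⟫ ≤ (∑ j ∈ Sᶜ, m j) * a := by
    rw [sum_mul]
    exact sum_le_sum fun j hj => mul_le_mul_of_nonneg_left (hSc j hj) (hm j).le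
  have hbalance := sum_add_sum_compl S (fun j => m j * ⟪q j, u⟫)
  rw [hcc.sum_mul_inner_eq_zero u] at hbalance
  have h := gap_bounds_of_moment_bounds hA hB hlt hlowS (by linarith) hup
  rw [← sum_add_sum_compl S m]
  exact ⟨h.1, h.2.trans (le_add_of_nonneg_left hA.le)⟩

theorem exists_projection (hcc : CCeqs m q) (hm : ∀ i, 0 < m i) (i : ι) :
    ∃ V : Finset ℝ, #V ≤ Fintype.card ι ∧ ‖q i‖ ∈ V ∧ (∃ x ∈ V, x ≤ 0) ∧
      ∀ a b, V.Consecutive a b → (b - a) ^ 3 ≤ ∑ j, m j ∧ (b - a) ^ 2 * b ≤ ∑ j, m j := by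
  obtain ⟨u, hu, hi⟩ := exists_norm_eq_one_inner_eq_norm (q i)
  refine ⟨univ.image fun j => ⟪q j, u⟫, card_image_le, hi ▸ mem_image_of_mem _ (mem_univ i), ?_,
    fun a b => hcc.gap_bounds hm hu⟩
  by_contra! h
  have := sum_pos (fun j _ => mul_pos (hm j) (h _ (mem_image_of_mem _ (mem_univ j))))
    ⟨i, mem_univ i⟩
  linarith [hcc.sum_mul_inner_eq_zero u]

end CCeqs

theorem three_mul_rpow_one_div_three {M x : ℝ} (hM : 0 ≤ M) (hx : 0 ≤ x) :
    3 * (M * x ^ 2 / 4) ^ ((1 : ℝ) / 3) =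
      M ^ ((1 : ℝ) / 3) * ((2 ^ ((1 : ℝ) / 3) + 2 ^ (-(2 : ℝ) / 3)) * x ^ ((2 : ℝ) / 3)) := by
  have h4 : (M * x ^ 2 / 4) ^ ((1 : ℝ) / 3) =
      M ^ ((1 : ℝ) / 3) * x ^ ((2 : ℝ) / 3) * 2 ^ (-(2 : ℝ) / 3) := by
    rw [div_eq_mul_inv, Real.mul_rpow (by positivity) (by norm_num),
      Real.mul_rpow hM (by positivity), ← Real.rpow_natCast x 2, ← Real.rpow_mul hx,
      show (4 : ℝ)⁻¹ = 2 ^ (-2 : ℝ) by norm_num, ← Real.rpow_mul (by norm_num)]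
    norm_num
  have h2 : (2 : ℝ) ^ ((1 : ℝ) / 3) = 2 * 2 ^ (-(2 : ℝ) / 3) := by
    rw [← Real.rpow_one_add' (by norm_num) (by norm_num)]
    norm_num
  rw [h4, h2]
  ring

theorem stmt5 (n : ℕ) (m : Fin n → ℝ) (hm : ∀ i, 0 < m i)
    (q : Fin n → E2) (hcc : CCeqs m q) :
    (∀ i, ‖q i‖ ≤ (∑ i, m i) ^ ((1 : ℝ) / 3) * ((n : ℝ) - 1)) ∧
    (4 ≤ n → ∀ i, ‖q i‖ ≤ (∑ i, m i) ^ ((1 : ℝ) / 3) *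
      (((2 : ℝ) ^ ((1 : ℝ) / 3) + (2 : ℝ) ^ (-(2 : ℝ) / 3)) * ((n : ℝ) - 2) ^ ((2 : ℝ) / 3))) := by
  refine ⟨fun i => ?_, fun hn i => ?_⟩
  all_goals
    obtain ⟨V, hV, hi, h₀, hgap⟩ := hcc.exists_projection hm i
    rw [Fintype.card_fin] at hV
    have hM : 0 < ∑ j, m j := sum_pos (fun j _ => hm j) ⟨i, mem_univ i⟩
  · exact le_of_consecutive_pow_three_le hM.le hV h₀ (fun a b h => (hgap a b h).1) _ hi
  · rw [← three_mul_rpow_one_div_three hM.le (sub_nonneg.2 (by exact_mod_cast (by omega : 2 ≤ n)))]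
    exact le_of_consecutive_sq_mul_le hM hn hV h₀ (fun a b h => (hgap a b h).2) _ hi
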